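/- arXiv:1610.07396 — 2 statements merged into one kernel-verified Lean document; each statement's English description precedes it below -/
import Mathlib

section
/- The function d(A,B) = ∫₀^∞ e^{-R} d_R(A,B) dR on C(M) × C(M) is a metric: it is nonnegative, symmetric, satisfies the triangle inequality, and d(A,B) = 0 holds if and only if A = B. -/
/-!
Each `d_R` is a pseudometric bounded by `1`, so the integral inherits nonnegativity, symmetry
and the triangle inequality as soon as `R ↦ d_R(A,B)` is measurable. Measurability follows from
right-continuity: in a proper space the compact sets `A ∩ closedBall p r` converge to
`A ∩ closedBall p R` in the Hausdorff distance as `r ↓ R`. If `d(A,B) = 0`, then `d_R(A,B) = 0`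
for almost every `R`, hence for arbitrarily large `R`; for closed sets this says
`A ∩ closedBall p R = B ∩ closedBall p R`, so `A = B`.
-/

open Metric Filter Set Topology

/-- The space of closed subsets of `M`. -/
abbrev ClosedSubsets (M : Type*) [MetricSpace M] := {A : Set M // IsClosed A}

/-- The truncated Hausdorff pseudo-distance `d_R(A,B) = min {1, d_Haus(A_R, B_R)}`,
where `A_R = A ∩ closedBall p R`, with the convention that the Hausdorff distance between
the empty set and a nonempty set is `+∞` (so the truncation gives `1`), and between two
empty sets is `0`. -/
noncomputable def dR {M : Type*} [MetricSpace M] (p : M) (R : ℝ) (A B : Set M) : ℝ :=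
  (min 1 (EMetric.hausdorffEdist (A ∩ closedBall p R) (B ∩ closedBall p R))).toReal

/-- `d(A,B) = ∫₀^∞ e^{-R} d_R(A,B) dR`. -/
noncomputable def dChab {M : Type*} [MetricSpace M] (p : M) (A B : Set M) : ℝ :=
  ∫ R in Ioi (0 : ℝ), Real.exp (-R) * dR p R A B

/-- The Chabauty topology on the space of closed subsets of `M`, generated by the sets
`{C | C ∩ K = ∅}` for `K` compact and `{C | C ∩ U ≠ ∅}` for `U` open. -/
def Chabauty (M : Type*) [MetricSpace M] : TopologicalSpace (ClosedSubsets M) :=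
  TopologicalSpace.generateFrom
    ({S | ∃ K : Set M, IsCompact K ∧ S = {C : ClosedSubsets M | C.1 ∩ K = ∅}} ∪
     {S | ∃ U : Set M, IsOpen U ∧ S = {C : ClosedSubsets M | (C.1 ∩ U).Nonempty}})

open MeasureTheory ENNReal

namespace ENNReal

variable {x y z e : ℝ≥0∞}

lemma min_one_ne_top (x : ℝ≥0∞) : min 1 x ≠ ∞ :=
  ((min_le_left 1 x).trans_lt one_lt_top).ne

lemma toReal_min_one_le_one (x : ℝ≥0∞) : (min 1 x).toReal ≤ 1 :=
  toReal_le_of_le_ofReal zero_le_one (by simp)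

lemma toReal_min_one_eq_zero_iff : (min 1 x).toReal = 0 ↔ x = 0 := by
  simp [toReal_eq_zero_iff]

lemma min_one_le_min_one_add (h : x ≤ y + e) : min 1 x ≤ min 1 y + e := by
  rcases le_total 1 y with hy | hy
  · simp [min_eq_left hy]
  · simpa [min_eq_right hy] using (min_le_right 1 x).trans h

lemma toReal_min_one_le_add (h : x ≤ y + z) :
    (min 1 x).toReal ≤ (min 1 y).toReal + (min 1 z).toReal := by
  have key : min 1 x ≤ min 1 y + min 1 z := by
    rcases le_total 1 z with hz | hz
    · simp [min_eq_left hz]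
    · simpa [min_eq_right hz] using min_one_le_min_one_add h
  rw [← toReal_add (min_one_ne_top y) (min_one_ne_top z)]
  exact toReal_mono (add_ne_top.2 ⟨min_one_ne_top y, min_one_ne_top z⟩) key

lemma edist_toReal_min_one_le (h₁ : x ≤ y + e) (h₂ : y ≤ x + e) :
    edist (min 1 x).toReal (min 1 y).toReal ≤ e := by
  rcases eq_or_ne e ∞ with rfl | he
  · exact le_top
  have toReal_le {a b : ℝ≥0∞} (h : a ≤ b + e) :
      (min 1 a).toReal ≤ (min 1 b).toReal + e.toReal := by
    rw [← toReal_add (min_one_ne_top b) he]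
    exact toReal_mono (add_ne_top.2 ⟨min_one_ne_top b, he⟩) (min_one_le_min_one_add h)
  rw [edist_dist, Real.dist_eq]
  refine ofReal_le_of_le_toReal (abs_sub_le_iff.2 ⟨?_, ?_⟩) <;> rw [sub_le_iff_le_add']
  exacts [toReal_le h₁, toReal_le h₂]

end ENNReal

lemma Metric.hausdorffEDist_le_add_hausdorffEDist {α : Type*} [PseudoEMetricSpace α]
    (s t s' t' : Set α) :
    hausdorffEDist s' t' ≤ hausdorffEDist s t + (hausdorffEDist s s' + hausdorffEDist t t') :=
  calc hausdorffEDist s' t'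
      ≤ hausdorffEDist s' s + (hausdorffEDist s t + hausdorffEDist t t') :=
        hausdorffEDist_triangle.trans (by gcongr; exact hausdorffEDist_triangle)
    _ = hausdorffEDist s t + (hausdorffEDist s s' + hausdorffEDist t t') := by
        rw [hausdorffEDist_comm (s := s')]; ring

lemma measurable_of_continuousWithinAt_Ici {α β : Type*} [TopologicalSpace α] [LinearOrder α]
    [OrderTopology α] [SecondCountableTopology α] [MeasurableSpace α] [BorelSpace α]
    [TopologicalSpace β] [MeasurableSpace β] [BorelSpace β] {f : α → β}
    (hf : ∀ x, ContinuousWithinAt f (Ici x) x) : Measurable f :=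
  measurable_of_isOpen fun _ hU ↦ MeasurableSet.of_mem_nhdsGT fun x hx ↦
    nhdsWithin_mono x Ioi_subset_Ici_self (hf x (hU.mem_nhds hx))

section

variable {M : Type*} [MetricSpace M]

lemma tendsto_hausdorffEDist_inter_closedBall [ProperSpace M] {A : Set M} (hA : IsClosed A)
    (p : M) (R : ℝ) :
    Tendsto (fun r ↦ hausdorffEDist (A ∩ closedBall p r) (A ∩ closedBall p R))
      (𝓝[≥] R) (𝓝 0) := by
  refine ENNReal.tendsto_nhds_zero.2 fun ε hε ↦ ?_
  set S := A ∩ closedBall p R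
  -- The points of `A ∩ closedBall p (R + 1)` that stay `ε`-far from `S` form a compact set disjoint
  -- from `closedBall p R = ⋂ r > R, closedBall p r`, so they already miss some `closedBall p r`.
  let far := closedBall p (R + 1) ∩ (A ∩ {x | ε ≤ infEDist x S})
  have far_compact : IsCompact far :=
    (isCompact_closedBall p (R + 1)).inter_right
      (hA.inter (isClosed_le continuous_const continuous_infEDist))
  have far_disjoint : far ∩ ⋂ r : Ioi R, closedBall p r = ∅ := by
    rw [← biInter_eq_iInter (t := fun r _ ↦ closedBall p r)]
    change far ∩ ⋂ r > R, closedBall p r = ∅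
    rw [biInter_gt_closedBall]
    refine eq_empty_of_forall_notMem fun x ⟨⟨_, hxA, hxε⟩, hxR⟩ ↦ ?_
    simp [infEDist_zero_of_mem (show x ∈ S from ⟨hxA, hxR⟩), hε.ne'] at hxε
  obtain ⟨⟨r₀, hr₀⟩, hr₀_empty⟩ := far_compact.elim_directed_family_closed _
    (fun _ ↦ isClosed_closedBall) far_disjoint
    (Monotone.directed_ge fun _ _ h ↦ closedBall_subset_closedBall h)
  filter_upwards [Ico_mem_nhdsGE (lt_min hr₀ (lt_add_one R))] with r ⟨hRr, hr⟩
  refine hausdorffEDist_le_of_infEDist (fun x hx ↦ not_lt.1 fun hxε ↦ ?_) fun x hx ↦ ?_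
  · have hr' := lt_min_iff.1 hr
    exact hr₀_empty.subset ⟨⟨closedBall_subset_closedBall hr'.2.le hx.2, hx.1, hxε.le⟩,
      closedBall_subset_closedBall hr'.1.le hx.2⟩
  · exact (infEDist_zero_of_mem (show x ∈ A ∩ closedBall p r from
      ⟨hx.1, closedBall_subset_closedBall hRr hx.2⟩)).trans_le zero_le

lemma dR_eq (p : M) (R : ℝ) (A B : Set M) :
    dR p R A B = (min 1 (hausdorffEDist (A ∩ closedBall p R) (B ∩ closedBall p R))).toReal :=
  rfl

lemma dR_nonneg (p : M) (R : ℝ) (A B : Set M) : 0 ≤ dR p R A B :=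
  toReal_nonneg

lemma dR_le_one (p : M) (R : ℝ) (A B : Set M) : dR p R A B ≤ 1 :=
  toReal_min_one_le_one _

lemma dR_comm (p : M) (R : ℝ) (A B : Set M) : dR p R A B = dR p R B A := by
  rw [dR_eq, dR_eq, hausdorffEDist_comm]

lemma dR_self (p : M) (R : ℝ) (A : Set M) : dR p R A A = 0 := by
  simp [dR_eq]

lemma dR_triangle (p : M) (R : ℝ) (A B C : Set M) :
    dR p R A C ≤ dR p R A B + dR p R B C :=
  toReal_min_one_le_add hausdorffEDist_triangle

lemma dR_eq_zero_iff (p : M) (R : ℝ) {A B : Set M} (hA : IsClosed A) (hB : IsClosed B) :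
    dR p R A B = 0 ↔ A ∩ closedBall p R = B ∩ closedBall p R := by
  rw [dR_eq, toReal_min_one_eq_zero_iff,
    (hA.inter isClosed_closedBall).hausdorffEDist_zero_iff (hB.inter isClosed_closedBall)]

lemma eq_of_frequently_inter_closedBall_eq (p : M) {A B : Set M}
    (h : ∃ᶠ R in atTop, A ∩ closedBall p R = B ∩ closedBall p R) : A = B := by
  ext x
  obtain ⟨R, hR, hAB⟩ := frequently_atTop.1 h (dist x p)
  simpa [hR] using Set.ext_iff.1 hAB x

lemma dChab_nonneg (p : M) (A B : Set M) : 0 ≤ dChab p A B :=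
  setIntegral_nonneg measurableSet_Ioi fun R _ ↦
    mul_nonneg (Real.exp_pos _).le (dR_nonneg p R A B)

lemma dChab_comm (p : M) (A B : Set M) : dChab p A B = dChab p B A := by
  simp only [dChab, dR_comm p _ A B]

lemma dChab_self (p : M) (A : Set M) : dChab p A A = 0 := by
  simp [dChab, dR_self]

variable [ProperSpace M]

lemma continuousWithinAt_dR (p : M) {A B : Set M} (hA : IsClosed A) (hB : IsClosed B) (R : ℝ) :
    ContinuousWithinAt (fun r ↦ dR p r A B) (Ici R) R := by
  rw [ContinuousWithinAt, tendsto_iff_edist_tendsto_0]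
  have he := (tendsto_hausdorffEDist_inter_closedBall hA p R).add
    (tendsto_hausdorffEDist_inter_closedBall hB p R)
  rw [add_zero] at he
  refine tendsto_of_tendsto_of_tendsto_of_le_of_le tendsto_const_nhds he (fun _ ↦ zero_le)
    fun r ↦ edist_toReal_min_one_le ?_ (hausdorffEDist_le_add_hausdorffEDist _ _ _ _)
  rw [hausdorffEDist_comm (s := A ∩ closedBall p r) (t := A ∩ closedBall p R),
    hausdorffEDist_comm (s := B ∩ closedBall p r) (t := B ∩ closedBall p R)]
  exact hausdorffEDist_le_add_hausdorffEDist _ _ _ _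

lemma measurable_dR (p : M) {A B : Set M} (hA : IsClosed A) (hB : IsClosed B) :
    Measurable fun R ↦ dR p R A B :=
  measurable_of_continuousWithinAt_Ici (continuousWithinAt_dR p hA hB)

lemma integrableOn_exp_neg_mul_dR (p : M) {A B : Set M} (hA : IsClosed A) (hB : IsClosed B) :
    IntegrableOn (fun R ↦ Real.exp (-R) * dR p R A B) (Ioi 0) := by
  refine (integrableOn_exp_neg_Ioi 0).mul_bdd (measurable_dR p hA hB).aestronglyMeasurable
    (c := 1) (Eventually.of_forall fun R ↦ ?_)
  rw [Real.norm_of_nonneg (dR_nonneg p R A B)]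
  exact dR_le_one p R A B

lemma dChab_triangle (p : M) {A B C : Set M} (hA : IsClosed A) (hB : IsClosed B)
    (hC : IsClosed C) :
    dChab p A C ≤ dChab p A B + dChab p B C := by
  have hAB := integrableOn_exp_neg_mul_dR p hA hB
  have hBC := integrableOn_exp_neg_mul_dR p hB hC
  rw [dChab, dChab, dChab, ← integral_add hAB hBC]
  refine setIntegral_mono_on (integrableOn_exp_neg_mul_dR p hA hC) (hAB.add hBC)
    measurableSet_Ioi fun R _ ↦ ?_
  rw [← mul_add]
  exact mul_le_mul_of_nonneg_left (dR_triangle p R A B C) (Real.exp_pos _).le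

lemma frequently_dR_eq_zero_of_dChab_eq_zero (p : M) {A B : Set M} (hA : IsClosed A)
    (hB : IsClosed B) (h : dChab p A B = 0) : ∃ᶠ R in atTop, dR p R A B = 0 := by
  have hae : ∀ᵐ R ∂volume.restrict (Ioi 0), Real.exp (-R) * dR p R A B = 0 :=
    (integral_eq_zero_iff_of_nonneg
      (fun R ↦ mul_nonneg (Real.exp_pos _).le (dR_nonneg p R A B))
      (integrableOn_exp_neg_mul_dR p hA hB)).1 h
  refine frequently_atTop.2 fun a ↦ ?_
  have : (ae (volume.restrict (Ioi (max a 0)))).NeBot := ae_restrict_neBot.2 (by simp)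
  obtain ⟨R, hR, haR⟩ := ((ae_restrict_of_ae_restrict_of_subset
    (Ioi_subset_Ioi (le_max_right a 0)) hae).and (ae_restrict_mem measurableSet_Ioi)).exists
  exact ⟨R, (le_max_left a 0).trans haR.le,
    (mul_eq_zero.1 hR).resolve_left (Real.exp_pos _).ne'⟩

lemma eq_of_dChab_eq_zero (p : M) {A B : Set M} (hA : IsClosed A) (hB : IsClosed B)
    (h : dChab p A B = 0) : A = B :=
  eq_of_frequently_inter_closedBall_eq p <|
    (frequently_dR_eq_zero_of_dChab_eq_zero p hA hB h).mono fun R hR ↦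
      (dR_eq_zero_iff p R hA hB).1 hR

end

/-- `d(A,B) = ∫₀^∞ e^{-R} d_R(A,B) dR` is a metric on the space of closed subsets of a
proper metric space: nonnegative, symmetric, satisfies the triangle inequality, and
vanishes exactly on the diagonal. -/
theorem dChab_is_metric (M : Type*) [MetricSpace M] [ProperSpace M] (p : M) :
    (∀ A B : ClosedSubsets M, 0 ≤ dChab p A.1 B.1) ∧
    (∀ A B : ClosedSubsets M, dChab p A.1 B.1 = dChab p B.1 A.1) ∧
    (∀ A B C : ClosedSubsets M, dChab p A.1 C.1 ≤ dChab p A.1 B.1 + dChab p B.1 C.1) ∧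
    (∀ A B : ClosedSubsets M, dChab p A.1 B.1 = 0 ↔ A = B) := by
  refine ⟨fun A B ↦ dChab_nonneg p A B, fun A B ↦ dChab_comm p A B,
    fun A B C ↦ dChab_triangle p A.2 B.2 C.2, fun A B ↦ ⟨fun h ↦ ?_, ?_⟩⟩
  · exact Subtype.ext (eq_of_dChab_eq_zero p A.2 B.2 h)
  · rintro rfl
    exact dChab_self p A.1
end

section
/- Suppose (C_i) converges to C in the Chabauty topology on C(M), and suppose R > 0 is such that every point x ∈ C with d(x,p) = R lies in the closure of C ∩ ball(p,R). Then the sets C_i ∩ closedBall(p,R) converge to C ∩ closedBall(p,R) in the Chabauty topology on closed subsets of the compact set closedBall(p,R); equivalently, d_R(C_i, C) → 0. -/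
open Metric Filter Set Topology

/-!
Chabauty convergence `Cᵢ → D` says two things: `Cᵢ` eventually meets every open set that `D`
meets, and eventually misses every compact set that `D` misses. Inside the compact ball
`B = closedBall p R`, the second property applied to `B` minus an `ε`-neighbourhood of `D ∩ B`
puts `Cᵢ ∩ B` near `D ∩ B`. The first property, applied to finitely many small balls covering
`D ∩ B`, puts `D ∩ B` near `Cᵢ ∩ B`, provided the balls can be taken to meet `D` inside the
open ball; this is what the hypothesis on the points of `D` on the sphere guarantees.
-/

lemma hausdorffEDist_le_of_subset_thickening {α : Type*} [PseudoEMetricSpace α] {s t : Set α}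
    {r : ℝ} (hs : s ⊆ thickening r t) (ht : t ⊆ thickening r s) :
    hausdorffEDist s t ≤ ENNReal.ofReal r :=
  hausdorffEDist_le_of_infEDist (fun _ hx => (mem_thickening_iff_infEDist_lt.1 (hs hx)).le)
    (fun _ hx => (mem_thickening_iff_infEDist_lt.1 (ht hx)).le)

namespace Chabauty

variable {M : Type*} [MetricSpace M] {ι : Type*} {l : Filter ι}
  {C : ι → ClosedSubsets M} {D : ClosedSubsets M}

lemma eventually_inter_nonempty (h : Tendsto C l (@nhds _ (Chabauty M) D)) {U : Set M}
    (hU : IsOpen U) (hD : (D.1 ∩ U).Nonempty) : ∀ᶠ i in l, ((C i).1 ∩ U).Nonempty :=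
  h (@IsOpen.mem_nhds _ (Chabauty M) _ _
    (TopologicalSpace.isOpen_generateFrom_of_mem (Or.inr ⟨U, hU, rfl⟩)) hD)

lemma eventually_inter_eq_empty (h : Tendsto C l (@nhds _ (Chabauty M) D)) {K : Set M}
    (hK : IsCompact K) (hD : D.1 ∩ K = ∅) : ∀ᶠ i in l, (C i).1 ∩ K = ∅ :=
  h (@IsOpen.mem_nhds _ (Chabauty M) _ _
    (TopologicalSpace.isOpen_generateFrom_of_mem (Or.inl ⟨K, hK, rfl⟩)) hD)

lemma eventually_inter_subset_thickening (h : Tendsto C l (@nhds _ (Chabauty M) D))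
    {K : Set M} (hK : IsCompact K) {ε : ℝ} (hε : 0 < ε) :
    ∀ᶠ i in l, (C i).1 ∩ K ⊆ thickening ε (D.1 ∩ K) := by
  have hDK : D.1 ∩ (K \ thickening ε (D.1 ∩ K)) = ∅ :=
    eq_empty_of_forall_notMem fun x ⟨hxD, hxK, hxε⟩ =>
      hxε (self_subset_thickening hε _ ⟨hxD, hxK⟩)
  filter_upwards [eventually_inter_eq_empty h (hK.diff isOpen_thickening) hDK] with i hi
  intro x ⟨hxC, hxK⟩
  by_contra hxε
  exact (eq_empty_iff_forall_notMem.1 hi) x ⟨hxC, hxK, hxε⟩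

lemma eventually_subset_thickening_inter (h : Tendsto C l (@nhds _ (Chabauty M) D))
    {U : Set M} (hU : IsOpen U) {S : Set M} (hS : IsCompact S)
    (hSD : S ⊆ closure (D.1 ∩ U)) {ε : ℝ} (hε : 0 < ε) :
    ∀ᶠ i in l, S ⊆ thickening ε ((C i).1 ∩ U) := by
  obtain ⟨t, htS, htfin, hcover⟩ := hS.finite_cover_balls (half_pos hε)
  have hmeets : ∀ x ∈ t, ∀ᶠ i in l, ((C i).1 ∩ (ball x (ε / 2) ∩ U)).Nonempty := by
    intro x hx
    obtain ⟨y, ⟨hyD, hyU⟩, hxy⟩ := Metric.mem_closure_iff.1 (hSD (htS hx)) _ (half_pos hε)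
    exact eventually_inter_nonempty h (isOpen_ball.inter hU) ⟨y, hyD, mem_ball'.2 hxy, hyU⟩
  filter_upwards [htfin.eventually_all.2 hmeets] with i hi
  intro y hy
  obtain ⟨x, hxt, hyx⟩ := mem_iUnion₂.1 (hcover hy)
  obtain ⟨z, hzC, hxz, hzU⟩ := hi x hxt
  refine mem_thickening_iff.2 ⟨z, ⟨hzC, hzU⟩, ?_⟩
  calc dist y z ≤ dist y x + dist x z := dist_triangle y x z
    _ < ε / 2 + ε / 2 := add_lt_add (mem_ball.1 hyx) (mem_ball'.1 hxz)
    _ = ε := add_halves ε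

end Chabauty

theorem dR_tendsto_of_chabauty_general (M : Type*) [MetricSpace M] [ProperSpace M] (p : M)
    (C : ℕ → ClosedSubsets M) (D : ClosedSubsets M)
    (h : Tendsto C atTop (@nhds _ (Chabauty M) D))
    (R : ℝ)
    (hgood : ∀ x ∈ D.1, dist x p = R → x ∈ closure (D.1 ∩ ball p R)) :
    Tendsto (fun i => dR p R (C i).1 D.1) atTop (nhds 0) := by
  have hD : D.1 ∩ closedBall p R ⊆ closure (D.1 ∩ ball p R) := fun x ⟨hxD, hxR⟩ =>
    (mem_closedBall.1 hxR).lt_or_eq.elim (fun hlt => subset_closure ⟨hxD, hlt⟩) (hgood x hxD)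
  have hB : IsCompact (closedBall p R) := isCompact_closedBall p R
  have hHaus : Tendsto (fun i => hausdorffEDist ((C i).1 ∩ closedBall p R)
      (D.1 ∩ closedBall p R)) atTop (𝓝 0) := by
    refine ENNReal.tendsto_nhds_zero.2 fun ε hε => ?_
    obtain ⟨r, -, hr, hrε⟩ := ENNReal.lt_iff_exists_real_btwn.1 hε
    have hr : 0 < r := ENNReal.ofReal_pos.1 hr
    filter_upwards [Chabauty.eventually_inter_subset_thickening h hB hr,
      Chabauty.eventually_subset_thickening_inter h isOpen_ball (hB.inter_left D.2) hD hr]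
      with i hCD hDC
    refine (hausdorffEDist_le_of_subset_thickening hCD (hDC.trans ?_)).trans hrε.le
    exact thickening_subset_of_subset r (inter_subset_inter_right _ ball_subset_closedBall)
  have hmin := (tendsto_const_nhds (x := (1 : ENNReal))).min hHaus
  rw [min_eq_right zero_le] at hmin
  exact (ENNReal.tendsto_toReal ENNReal.zero_ne_top).comp hmin

/-- Suppose `C_i → C` in the Chabauty topology and `R > 0` is such that every `x ∈ C` with
`d(x,p) = R` lies in the closure of `C ∩ ball p R`. Then `C_i ∩ closedBall p R` converges
to `C ∩ closedBall p R` in the Hausdorff sense, i.e. `d_R(C_i, C) → 0`. -/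
theorem dR_tendsto_of_chabauty (M : Type*) [MetricSpace M] [ProperSpace M] (p : M)
    (C : ℕ → ClosedSubsets M) (D : ClosedSubsets M)
    (h : Tendsto C atTop (@nhds _ (Chabauty M) D))
    (R : ℝ) (hR : 0 < R)
    (hgood : ∀ x ∈ D.1, dist x p = R → x ∈ closure (D.1 ∩ ball p R)) :
    Tendsto (fun i => dR p R (C i).1 D.1) atTop (nhds 0) :=
  dR_tendsto_of_chabauty_general M p C D h R hgood
end
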